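/- Let d ≥ 1, let v : ℝ × ℝ^d → ℝ^d be continuously differentiable, and let ψ : ℝ × ℝ^d → ℝ^d be twice continuously differentiable with ∂_t ψ(t,x) + D_x ψ(t,x)·v(t,x) = 0 for all (t,x). Define J(t,x) := det(D_x ψ(t,x)). Then J satisfies ∂_t J(t,x) + ⟨∇_x J(t,x), v(t,x)⟩ = −J(t,x)·div_x v(t,x) for all (t,x). Equivalently, U := 1 − J satisfies −∂_t U − ⟨v, ∇_x U⟩ = −div_x v + U·div_x v, which is the Jacobian transport equation used in PDE-constrained LDDMM based on the state equation. -/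

import Mathlib

open scoped RealInnerProductSpace

noncomputable def spatialDiv {d : ℕ}
    (w : EuclideanSpace ℝ (Fin d) → EuclideanSpace ℝ (Fin d))
    (x : EuclideanSpace ℝ (Fin d)) : ℝ :=
  LinearMap.trace ℝ (EuclideanSpace ℝ (Fin d)) (fderiv ℝ w x).toLinearMap

/-- The Jacobian determinant `J(t,x) = det(Dₓψ(t,x))` of a time-dependent map. -/
noncomputable def jacDet {d : ℕ}
    (ψ : ℝ × EuclideanSpace ℝ (Fin d) → EuclideanSpace ℝ (Fin d))
    (t : ℝ) (x : EuclideanSpace ℝ (Fin d)) : ℝ :=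
  LinearMap.det (fderiv ℝ (fun y => ψ (t, y)) x).toLinearMap

/-!
Write `A = Dₓψ`, `B = Dₓv` and `w = (1, v)`, so that `∂ₜJ + ⟨∇ₓJ, v⟩ = DJ · w`. Differentiating
the state equation `Dψ · w = 0` in a spatial direction and using the symmetry of `D²ψ` gives
`DA · w = -A ∘ B`. Jacobi's formula `D det(A)[A ∘ B] = det A · tr B` then yields
`DJ · w = -J · div v`; it needs no invertibility of `A`, because `A + r (A ∘ B) = A ∘ (1 + r B)`
and `d/dr det (1 + r B)` at `0` is `tr B`.
-/

open Polynomial Filter Topology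

namespace ContinuousLinearMap

variable {E : Type*} [NormedAddCommGroup E] [NormedSpace ℝ E] [FiniteDimensional ℝ E]

theorem differentiable_det : Differentiable ℝ (fun A : E →L[ℝ] E => A.det) := by
  let b := Module.finBasis ℝ E
  let entry : Fin _ → Fin _ → (E →L[ℝ] E) →L[ℝ] ℝ := fun i j =>
    LinearMap.toContinuousLinearMap
      (Matrix.entryLinearMap ℝ ℝ i j ∘ₗ (LinearMap.toMatrix b b).toLinearMap ∘ₗ coeLM ℝ)
  have h : (fun A : E →L[ℝ] E => A.det) = fun A => (Matrix.of fun i j => entry i j A).det := by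
    funext A
    rw [ContinuousLinearMap.det, ← LinearMap.det_toMatrix b]
    rfl
  rw [h]
  simp only [Matrix.det_apply, Matrix.of_apply]
  fun_prop

theorem hasDerivAt_det_one_add_smul (B : E →L[ℝ] E) :
    HasDerivAt (fun r : ℝ => (1 + r • B).det) (LinearMap.trace ℝ E B) 0 := by
  let b := Module.finBasis ℝ E
  set M := LinearMap.toMatrix b b B
  have h : (fun r : ℝ => (1 + r • B).det)
      = fun r => (Matrix.det (1 + (X : ℝ[X]) • M.map C)).eval r := by
    funext r
    have hB : LinearMap.toMatrix b b (1 + r • B : E →L[ℝ] E) = 1 + r • M := by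
      rw [toLinearMap_add, toLinearMap_smul, map_add, map_smul, toLinearMap_one,
        LinearMap.toMatrix_one]
    rw [← coe_evalRingHom, RingHom.map_det, ContinuousLinearMap.det, ← LinearMap.det_toMatrix b,
      hB]
    congr 1
    ext i j
    by_cases hij : i = j <;> simp [hij] <;> ring
  rw [h, LinearMap.trace_eq_matrix_trace ℝ b, ← Matrix.derivative_det_one_add_X_smul]
  exact Polynomial.hasDerivAt _ 0

theorem fderiv_det_comp (A B : E →L[ℝ] E) :
    fderiv ℝ (fun A : E →L[ℝ] E => A.det) A (A ∘L B) = A.det * LinearMap.trace ℝ E B := by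
  have hline : HasDerivAt (fun r : ℝ => A ∘L (1 + r • B)) (A ∘L B) 0 := by
    simpa [comp_add, comp_smul] using ((hasDerivAt_id (0 : ℝ)).smul_const (A ∘L B)).const_add A
  have hchain := (differentiable_det (A ∘L (1 + (0 : ℝ) • B))).hasFDerivAt.comp_hasDerivAt 0 hline
  have hprod : HasDerivAt (fun r : ℝ => (A ∘L (1 + r • B)).det)
      (A.det * LinearMap.trace ℝ E B) 0 :=
    ((hasDerivAt_det_one_add_smul B).const_mul A.det).congr_of_eventuallyEq
      (.of_forall fun _ => LinearMap.det_comp _ _)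
  have hA : A ∘L (1 + (0 : ℝ) • B) = A := by ext; simp
  rw [hA] at hchain
  exact hchain.unique hprod

end ContinuousLinearMap

section SecondDerivative

variable {P F : Type*} [NormedAddCommGroup P] [NormedSpace ℝ P] [NormedAddCommGroup F]
  [NormedSpace ℝ F]

theorem fderiv_fderiv_apply_eq_neg_comp_of_fderiv_apply_eq_zero {f : P → F} {w : P → P}
    {p : P} (hf : ContDiffAt ℝ 2 f p) (hw : DifferentiableAt ℝ w p)
    (h0 : ∀ᶠ q in 𝓝 p, fderiv ℝ f q (w q) = 0) :
    fderiv ℝ (fderiv ℝ f) p (w p) = -(fderiv ℝ f p ∘L fderiv ℝ w p) := by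
  have hf' : DifferentiableAt ℝ (fderiv ℝ f) p :=
    (hf.fderiv_right (m := 1) le_rfl).differentiableAt one_ne_zero
  have hderiv := hf'.hasFDerivAt.clm_apply hw.hasFDerivAt
  have hzero : HasFDerivAt (fun q => fderiv ℝ f q (w q)) (0 : P →L[ℝ] F) p :=
    (hasFDerivAt_const 0 p).congr_of_eventuallyEq h0
  ext h
  have hh := congr($(hderiv.unique hzero) h)
  simp only [add_apply, ContinuousLinearMap.comp_apply,
    ContinuousLinearMap.flip_apply, zero_apply] at hh
  rw [hf.isSymmSndFDerivAt (by simp), neg_apply]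
  exact eq_neg_of_add_eq_zero_right hh

end SecondDerivative

section Slices

variable {E F : Type*} [NormedAddCommGroup E] [NormedSpace ℝ E] [NormedAddCommGroup F]
  [NormedSpace ℝ F]

noncomputable def spatialFDeriv (f : ℝ × E → F) (q : ℝ × E) : E →L[ℝ] F :=
  fderiv ℝ f q ∘L ContinuousLinearMap.inr ℝ ℝ E

variable {f : ℝ × E → F} {t : ℝ} {x : E}

theorem DifferentiableAt.fderiv_comp_prodMk_right (hf : DifferentiableAt ℝ f (t, x)) :
    fderiv ℝ (fun y => f (t, y)) x = spatialFDeriv f (t, x) :=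
  (hf.hasFDerivAt.comp x (hasFDerivAt_prodMk_right t x)).fderiv

theorem DifferentiableAt.deriv_add_fderiv_comp_prodMk (hf : DifferentiableAt ℝ f (t, x))
    (w : E) :
    deriv (fun s => f (s, x)) t + fderiv ℝ (fun y => f (t, y)) x w = fderiv ℝ f (t, x) (1, w) := by
  have hs : HasDerivAt (fun s => f (s, x)) (fderiv ℝ f (t, x) (1, 0)) t :=
    hf.hasFDerivAt.comp_hasDerivAt t ((hasDerivAt_id t).prodMk (hasDerivAt_const t x))
  rw [hs.deriv, hf.fderiv_comp_prodMk_right, spatialFDeriv, ContinuousLinearMap.comp_apply,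
    ← map_add]
  simp

end Slices

section Transport

variable {E : Type*} [NormedAddCommGroup E] [NormedSpace ℝ E] [FiniteDimensional ℝ E]
  {ψ v : ℝ × E → E}

theorem ContDiff.differentiable_det_spatialFDeriv (hψ : ContDiff ℝ 2 ψ) :
    Differentiable ℝ (fun q => (spatialFDeriv ψ q).det) := by
  have hD : Differentiable ℝ (spatialFDeriv ψ) :=
    ((ContinuousLinearMap.precomp E (ContinuousLinearMap.inr ℝ ℝ E)).differentiable.comp
      ((hψ.fderiv_right (m := 1) le_rfl).differentiable one_ne_zero) :)
  exact (ContinuousLinearMap.differentiable_det.comp hD :)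

theorem fderiv_det_spatialFDeriv_apply (hψ : ContDiff ℝ 2 ψ) (hv : Differentiable ℝ v)
    (hstate : ∀ q, fderiv ℝ ψ q (1, v q) = 0) (p : ℝ × E) :
    fderiv ℝ (fun q => (spatialFDeriv ψ q).det) p (1, v p)
      = -((spatialFDeriv ψ p).det * LinearMap.trace ℝ E (spatialFDeriv v p)) := by
  set Φ : (ℝ × E →L[ℝ] E) →L[ℝ] E →L[ℝ] E :=
    ContinuousLinearMap.precomp E (ContinuousLinearMap.inr ℝ ℝ E)
  have hψ' : DifferentiableAt ℝ (fderiv ℝ ψ) p :=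
    (hψ.fderiv_right (m := 1) le_rfl).differentiable one_ne_zero p
  have hw : HasFDerivAt (fun q => ((1 : ℝ), v q)) ((0 : ℝ × E →L[ℝ] ℝ).prod (fderiv ℝ v p)) p :=
    (hasFDerivAt_const 1 p).prodMk (hv p).hasFDerivAt
  have hmix := fderiv_fderiv_apply_eq_neg_comp_of_fderiv_apply_eq_zero hψ.contDiffAt
    hw.differentiableAt (.of_forall hstate)
  rw [hw.fderiv] at hmix
  have hdir : Φ (fderiv ℝ (fderiv ℝ ψ) p (1, v p)) = -(Φ (fderiv ℝ ψ p) ∘L spatialFDeriv v p) := by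
    rw [hmix]; ext y; simp [Φ, spatialFDeriv]
  have hJ : HasFDerivAt (fun q => (spatialFDeriv ψ q).det)
      (fderiv ℝ (fun A : E →L[ℝ] E => A.det) (Φ (fderiv ℝ ψ p)) ∘L
        (Φ ∘L fderiv ℝ (fderiv ℝ ψ) p)) p :=
    ((ContinuousLinearMap.differentiable_det _).hasFDerivAt.comp p
      (Φ.hasFDerivAt.comp p hψ'.hasFDerivAt) :)
  rw [hJ.fderiv, ContinuousLinearMap.comp_apply, ContinuousLinearMap.comp_apply, hdir, map_neg,
    ContinuousLinearMap.fderiv_det_comp]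
  rfl

end Transport

section JacobianDeterminant

variable {d : ℕ} {ψ v : ℝ × EuclideanSpace ℝ (Fin d) → EuclideanSpace ℝ (Fin d)}

theorem jacDet_eq_det_spatialFDeriv (hψ : Differentiable ℝ ψ) :
    (fun q : ℝ × EuclideanSpace ℝ (Fin d) => jacDet ψ q.1 q.2)
      = fun q => (spatialFDeriv ψ q).det :=
  funext fun q => congrArg ContinuousLinearMap.det (hψ q).fderiv_comp_prodMk_right

theorem ContDiff.differentiable_jacDet (hψ : ContDiff ℝ 2 ψ) :
    Differentiable ℝ (fun q : ℝ × EuclideanSpace ℝ (Fin d) => jacDet ψ q.1 q.2) :=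
  jacDet_eq_det_spatialFDeriv (hψ.differentiable two_ne_zero) ▸
    hψ.differentiable_det_spatialFDeriv

theorem fderiv_jacDet_apply (hψ : ContDiff ℝ 2 ψ) (hv : Differentiable ℝ v)
    (hdef : ∀ (t : ℝ) (x : EuclideanSpace ℝ (Fin d)),
      deriv (fun s => ψ (s, x)) t + fderiv ℝ (fun y => ψ (t, y)) x (v (t, x)) = 0)
    (t : ℝ) (x : EuclideanSpace ℝ (Fin d)) :
    fderiv ℝ (fun q : ℝ × EuclideanSpace ℝ (Fin d) => jacDet ψ q.1 q.2) (t, x) (1, v (t, x))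
      = -(jacDet ψ t x * spatialDiv (fun y => v (t, y)) x) := by
  have hψ1 := hψ.differentiable two_ne_zero
  have hstate : ∀ q, fderiv ℝ ψ q (1, v q) = 0 := fun q =>
    ((hψ1 q).deriv_add_fderiv_comp_prodMk (v q)).symm.trans (hdef q.1 q.2)
  have hJ := jacDet_eq_det_spatialFDeriv hψ1
  rw [hJ, fderiv_det_spatialFDeriv_apply hψ hv hstate, spatialDiv,
    (hv _).fderiv_comp_prodMk_right, congrFun hJ (t, x)]

end JacobianDeterminant

theorem stmt5_general {d : ℕ}
    (v : ℝ × EuclideanSpace ℝ (Fin d) → EuclideanSpace ℝ (Fin d))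
    (hv : ContDiff ℝ 1 v)
    (ψ : ℝ × EuclideanSpace ℝ (Fin d) → EuclideanSpace ℝ (Fin d))
    (hψ : ContDiff ℝ 2 ψ)
    (hdef : ∀ (t : ℝ) (x : EuclideanSpace ℝ (Fin d)),
      deriv (fun s => ψ (s, x)) t + fderiv ℝ (fun y => ψ (t, y)) x (v (t, x)) = 0) :
    (∀ (t : ℝ) (x : EuclideanSpace ℝ (Fin d)),
        deriv (fun s => jacDet ψ s x) t
          + ⟪gradient (fun y => jacDet ψ t y) x, v (t, x)⟫
          = - jacDet ψ t x * spatialDiv (fun y => v (t, y)) x)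
    ∧ (∀ (t : ℝ) (x : EuclideanSpace ℝ (Fin d)),
        - deriv (fun s => 1 - jacDet ψ s x) t
          - ⟪v (t, x), gradient (fun y => 1 - jacDet ψ t y) x⟫
          = - spatialDiv (fun y => v (t, y)) x
            + (1 - jacDet ψ t x) * spatialDiv (fun y => v (t, y)) x) := by
  have htransport := fderiv_jacDet_apply hψ (hv.differentiable one_ne_zero) hdef
  have hJ := hψ.differentiable_jacDet
  refine ⟨fun t x => ?_, fun t x => ?_⟩
  · rw [inner_gradient_left, neg_mul, ← htransport]
    exact (hJ _).deriv_add_fderiv_comp_prodMk _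
  · have hU : deriv (fun s => 1 - jacDet ψ s x) t
        + fderiv ℝ (fun y => 1 - jacDet ψ t y) x (v (t, x))
        = fderiv ℝ (fun q : ℝ × EuclideanSpace ℝ (Fin d) => 1 - jacDet ψ q.1 q.2) (t, x)
          (1, v (t, x)) :=
      ((hJ (t, x)).const_sub 1).deriv_add_fderiv_comp_prodMk _
    rw [fderiv_const_sub (x := (t, x)), neg_apply, htransport] at hU
    rw [real_inner_comm, inner_gradient_left]
    linear_combination -hU

/-- if `v` is `C¹`, `ψ` is `C²` and satisfies the deformation state equation
`∂ₜ ψ + Dₓψ · v = 0`, then `J(t,x) = det(Dₓψ(t,x))` satisfies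
`∂ₜ J + ⟨∇ₓ J, v⟩ = -J · div_x v`; equivalently `U = 1 - J` satisfies
`-∂ₜ U - ⟨v, ∇ₓ U⟩ = -div_x v + U · div_x v`. -/
theorem stmt5 {d : ℕ} (hd : 1 ≤ d)
    (v : ℝ × EuclideanSpace ℝ (Fin d) → EuclideanSpace ℝ (Fin d))
    (hv : ContDiff ℝ 1 v)
    (ψ : ℝ × EuclideanSpace ℝ (Fin d) → EuclideanSpace ℝ (Fin d))
    (hψ : ContDiff ℝ 2 ψ)
    (hdef : ∀ (t : ℝ) (x : EuclideanSpace ℝ (Fin d)),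
      deriv (fun s => ψ (s, x)) t + fderiv ℝ (fun y => ψ (t, y)) x (v (t, x)) = 0) :
    (∀ (t : ℝ) (x : EuclideanSpace ℝ (Fin d)),
        deriv (fun s => jacDet ψ s x) t
          + ⟪gradient (fun y => jacDet ψ t y) x, v (t, x)⟫
          = - jacDet ψ t x * spatialDiv (fun y => v (t, y)) x)
    ∧ (∀ (t : ℝ) (x : EuclideanSpace ℝ (Fin d)),
        - deriv (fun s => 1 - jacDet ψ s x) t
          - ⟪v (t, x), gradient (fun y => 1 - jacDet ψ t y) x⟫
          = - spatialDiv (fun y => v (t, y)) x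
            + (1 - jacDet ψ t x) * spatialDiv (fun y => v (t, y)) x) :=
  stmt5_general v hv ψ hψ hdef
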